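/- arXiv:2011.08991 — 4 statements merged into one kernel-verified Lean document; each statement's English description precedes it below -/
import Mathlib

section
/- Let H be an RKHS on R_+^2 with kernel 𝔎((x,y),(x',y')) = K(x,x')L(y,y') for symmetric positive semidefinite kernels K and L on R_+. Given data points (X_i, Y_i), i = 1,…,n, and weights π̂_i ∈ R and coefficients A_{ik} ∈ R, define Ψ_n = sup_{ω ∈ B_1(H)} (1/n) ∑_{i=1}^n ( ω(X_i,Y_i) π̂_i − ∑_{k=1}^n ω(X_i,Y_k) A_{ik} ). Then Ψ_n² = (1/n²) trace( 𝐊 Π 𝐋 Π − 2 𝐊 Π 𝐋 𝐀ᵀ + 𝐊 𝐀 𝐋 𝐀ᵀ ), where 𝐊_{ik} = K(X_i,X_k), 𝐋_{ik} = L(Y_i,Y_k), 𝐀_{ik} = A_{ik}, and Π is the diagonal matrix with entries π̂_i. -/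
open Matrix BigOperators

lemma sup_inner_ball {H : Type*} [NormedAddCommGroup H] [InnerProductSpace ℝ H]
    (h : H) : sSup {r : ℝ | ∃ ω : H, ‖ω‖ ≤ 1 ∧ r = (inner ℝ ω h : ℝ)} = ‖h‖ := by
  apply IsGreatest.csSup_eq
  constructor
  · by_cases h0 : h = 0
    · exact ⟨0, by simp [h0]⟩
    · refine ⟨‖h‖⁻¹ • h, ?_, ?_⟩
      · simp [norm_smul, inv_mul_cancel₀ (norm_ne_zero_iff.mpr h0)]
      · rw [real_inner_smul_left, real_inner_self_eq_norm_sq]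
        rw [pow_two]
        field_simp
  · rintro r ⟨ω, hω, rfl⟩
    calc (inner ℝ ω h : ℝ) ≤ ‖ω‖ * ‖h‖ := real_inner_le_norm ω h
    _ ≤ 1 * ‖h‖ := by gcongr
    _ = ‖h‖ := one_mul _

/-- For an RKHS `H` on `ℝ₊²` with factorized kernel
`𝔎((x,y),(x',y')) = K(x,x')·L(y,y')` (encoded via the feature map `Φ` with
reproducing property `ω(x,y) = ⟪ω, Φ(x,y)⟫` and
`⟪Φ(x,y), Φ(x',y')⟫ = K x x' * L y y'`), the statistic
`Ψₙ = sup_{‖ω‖ ≤ 1} (1/n) ∑ᵢ (ω(Xᵢ,Yᵢ) π̂ᵢ − ∑ₖ ω(Xᵢ,Yₖ) Aᵢₖ)` satisfies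
`Ψₙ² = (1/n²) trace(𝐊 Π 𝐋 Π − 2 𝐊 Π 𝐋 𝐀ᵀ + 𝐊 𝐀 𝐋 𝐀ᵀ)`. -/
theorem stmt2 {H : Type*} [NormedAddCommGroup H] [InnerProductSpace ℝ H]
    [CompleteSpace H]
    (K L : ℝ → ℝ → ℝ)
    (hKsymm : ∀ x x', K x x' = K x' x) (hLsymm : ∀ y y', L y y' = L y' y)
    (hKpsd : ∀ (m : ℕ) (s c : Fin m → ℝ), 0 ≤ ∑ i, ∑ j, c i * c j * K (s i) (s j))
    (hLpsd : ∀ (m : ℕ) (s c : Fin m → ℝ), 0 ≤ ∑ i, ∑ j, c i * c j * L (s i) (s j))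
    (Φ : ℝ × ℝ → H)
    (hker : ∀ x y x' y', (inner ℝ (Φ (x, y)) (Φ (x', y')) : ℝ) = K x x' * L y y')
    (n : ℕ) (X Y : Fin n → ℝ) (πh : Fin n → ℝ) (A : Matrix (Fin n) (Fin n) ℝ)
    (Ψn : ℝ)
    (hΨ : Ψn = sSup {r : ℝ | ∃ ω : H, ‖ω‖ ≤ 1 ∧
        r = (1 / (n : ℝ)) * ∑ i, ((inner ℝ ω (Φ (X i, Y i)) : ℝ) * πh i
              - ∑ k, (inner ℝ ω (Φ (X i, Y k)) : ℝ) * A i k)}) :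
    Ψn ^ 2 = (1 / (n : ℝ)^2) *
      Matrix.trace
        ((Matrix.of fun i k => K (X i) (X k)) * Matrix.diagonal πh *
            (Matrix.of fun i k => L (Y i) (Y k)) * Matrix.diagonal πh
          - 2 • ((Matrix.of fun i k => K (X i) (X k)) * Matrix.diagonal πh *
              (Matrix.of fun i k => L (Y i) (Y k)) * Aᵀ)
          + (Matrix.of fun i k => K (X i) (X k)) * A *
              (Matrix.of fun i k => L (Y i) (Y k)) * Aᵀ) := by
  classical
  set M : Matrix (Fin n) (Fin n) ℝ := Matrix.of fun i k => K (X i) (X k) with hM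
  set N : Matrix (Fin n) (Fin n) ℝ := Matrix.of fun i k => L (Y i) (Y k) with hN
  set B : Matrix (Fin n) (Fin n) ℝ := Matrix.diagonal πh - A with hB
  set h : H := (1 / (n : ℝ)) • ∑ i, ∑ k, B i k • Φ (X i, Y k) with hhdef
  -- rewrite the functional as an inner product with h
  have hrep : ∀ ω : H, (1 / (n : ℝ)) * ∑ i, ((inner ℝ ω (Φ (X i, Y i)) : ℝ) * πh i
      - ∑ k, (inner ℝ ω (Φ (X i, Y k)) : ℝ) * A i k) = (inner ℝ ω h : ℝ) := by
    intro ω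
    rw [hhdef, real_inner_smul_right]
    congr 1
    rw [inner_sum]
    refine Finset.sum_congr rfl fun i _ => ?_
    rw [inner_sum]
    simp only [real_inner_smul_right, hB, Matrix.sub_apply, Matrix.diagonal_apply,
      sub_mul, ite_mul, zero_mul, Finset.sum_sub_distrib, Finset.sum_ite_eq,
      Finset.mem_univ, if_true]
    ring_nf
    congr 1
    exact Finset.sum_congr rfl fun k _ => mul_comm _ _
  -- Ψn = ‖h‖
  have hsup : Ψn = ‖h‖ := by
    rw [hΨ, ← sup_inner_ball h]
    congr 1
    ext r
    constructor
    · rintro ⟨ω, hω, rfl⟩; exact ⟨ω, hω, (hrep ω)⟩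
    · rintro ⟨ω, hω, rfl⟩; exact ⟨ω, hω, (hrep ω).symm⟩
  -- expand inner h h
  have hinner : (inner ℝ h h : ℝ) =
      (1 / (n : ℝ))^2 * ∑ i, ∑ j, ∑ k, ∑ l,
        B i k * B j l * (K (X i) (X j) * L (Y k) (Y l)) := by
    rw [hhdef, real_inner_smul_left, real_inner_smul_right, ← mul_assoc, ← pow_two]
    congr 1
    rw [sum_inner]
    refine Finset.sum_congr rfl fun i _ => ?_
    simp only [sum_inner, inner_sum, real_inner_smul_left, real_inner_smul_right, hker]
    refine Finset.sum_congr rfl fun j _ => ?_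
    rw [Finset.sum_comm]
    exact Finset.sum_congr rfl fun k _ => Finset.sum_congr rfl fun l _ => by ring
  have htr : Matrix.trace (M * B * N * Bᵀ) =
      ∑ i, ∑ j, ∑ k, ∑ l, B i k * B j l * (K (X i) (X j) * L (Y k) (Y l)) := by
    conv_rhs => rw [Finset.sum_comm]
    simp only [Matrix.trace, Matrix.diag, Matrix.mul_apply, Matrix.transpose_apply,
      Finset.sum_mul, Finset.mul_sum]
    have rot : ∀ f : Fin n → Fin n → Fin n → Fin n → ℝ,
        (∑ a, ∑ b, ∑ c, ∑ d, f a b c d) = ∑ d, ∑ a, ∑ b, ∑ c, f a b c d := by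
      intro f
      calc (∑ a, ∑ b, ∑ c, ∑ d, f a b c d)
          = ∑ a, ∑ b, ∑ d, ∑ c, f a b c d :=
            Finset.sum_congr rfl fun a _ => Finset.sum_congr rfl fun b _ =>
              Finset.sum_comm
        _ = ∑ a, ∑ d, ∑ b, ∑ c, f a b c d :=
            Finset.sum_congr rfl fun a _ => Finset.sum_comm
        _ = ∑ d, ∑ a, ∑ b, ∑ c, f a b c d := Finset.sum_comm
    rw [rot]
    refine Finset.sum_congr rfl fun y _ => Finset.sum_congr rfl fun x _ =>
      Finset.sum_congr rfl fun k _ => Finset.sum_congr rfl fun l _ => ?_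
    simp only [hM, hN, hB, Matrix.of_apply]
    rw [hLsymm (Y l) (Y k)]
    ring
  have hMT : Mᵀ = M := by
    ext i j
    simp only [Matrix.transpose_apply, hM, Matrix.of_apply]
    exact hKsymm _ _
  have hNT : Nᵀ = N := by
    ext i j
    simp only [Matrix.transpose_apply, hN, Matrix.of_apply]
    exact hLsymm _ _
  have key : Matrix.trace (M * A * N * Matrix.diagonal πh) =
      Matrix.trace (M * Matrix.diagonal πh * N * Aᵀ) := by
    conv_lhs => rw [← Matrix.trace_transpose]
    simp only [Matrix.transpose_mul, hMT, hNT, Matrix.diagonal_transpose]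
    rw [Matrix.trace_mul_comm]
    simp only [Matrix.mul_assoc]
    rw [Matrix.trace_mul_comm]
    simp only [Matrix.mul_assoc]
    rw [Matrix.trace_mul_comm]
    simp only [Matrix.mul_assoc]
  have hmat : Matrix.trace (M * Matrix.diagonal πh * N * Matrix.diagonal πh
        - 2 • (M * Matrix.diagonal πh * N * Aᵀ) + M * A * N * Aᵀ)
      = Matrix.trace (M * B * N * Bᵀ) := by
    rw [hB, Matrix.transpose_sub, Matrix.diagonal_transpose]
    simp only [Matrix.mul_sub, Matrix.sub_mul, Matrix.trace_sub, Matrix.trace_add,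
      Matrix.trace_smul, two_smul]
    rw [key]
    ring
  rw [hsup, ← real_inner_self_eq_norm_sq, hinner, ← htr, ← hmat, div_pow, one_pow]
end

section
/- Suppose X, Y are jointly continuously distributed on R_+ with joint density f_{XY} supported on {x ≤ y}, and suppose f_{XY}(x,y) = f̃_X(x)·f̃_Y(y) for all x ≤ y (quasi-independence of the density). Set π(x,y) = P(X ≤ x, Y ≥ y) = ∫_0^x ∫_y^∞ f_{XY}(u,v) dv du. Then ρ(x,y) := −π(x,y)·∂²π/∂x∂y(x,y) + ∂π/∂x(x,y)·∂π/∂y(x,y) = 0 for all x ≤ y. -/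
open MeasureTheory

/-- if the joint density factorizes as
`f(x,y) = f̃_X(x)·f̃_Y(y)` on `{x ≤ y}` (quasi-independence) and is supported
there, then with `π(x,y) = ∫₀ˣ ∫ᵧ^∞ f` and the partial derivatives
`∂π/∂x(x,y) = ∫ᵧ^∞ f(x,v)dv`, `∂π/∂y(x,y) = −∫₀ˣ f(u,y)du`,
`∂²π/∂x∂y(x,y) = −f(x,y)`, the function
`ρ = −π·∂²π/∂x∂y + (∂π/∂x)(∂π/∂y)` vanishes for all `x ≤ y`. -/
theorem stmt6 (f : ℝ → ℝ → ℝ) (ftX ftY : ℝ → ℝ)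
    (hnnX : ∀ x, 0 ≤ ftX x) (hnnY : ∀ y, 0 ≤ ftY y)
    (hfac : ∀ x y, 0 ≤ x → x ≤ y → f x y = ftX x * ftY y)
    (hsupp : ∀ x y, ¬ (0 ≤ x ∧ x ≤ y) → f x y = 0)
    (hInt : Integrable (Function.uncurry f))
    (π : ℝ → ℝ → ℝ)
    (hπ : ∀ x y, π x y = ∫ u in Set.Ioc 0 x, ∫ v in Set.Ici y, f u v) :
    ∀ x y : ℝ, 0 ≤ x → x ≤ y →
      -(π x y) * (-(f x y))
        + (∫ v in Set.Ici y, f x v) * (-(∫ u in Set.Ioc 0 x, f u y)) = 0 := by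
  intro x y hx hxy
  set B : ℝ := ∫ v in Set.Ici y, ftY v with hBdef
  set A : ℝ := ∫ u in Set.Ioc 0 x, ftX u with hAdef
  have hrow : ∀ u : ℝ, 0 ≤ u → u ≤ y → (∫ v in Set.Ici y, f u v) = ftX u * B := by
    intro u hu huy
    have h1 : (∫ v in Set.Ici y, f u v) = ∫ v in Set.Ici y, ftX u * ftY v := by
      refine setIntegral_congr_fun measurableSet_Ici ?_
      intro v hv
      exact hfac u v hu (le_trans huy hv)
    rw [h1, integral_const_mul]
  have hπeq : π x y = A * B := by
    rw [hπ x y]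
    have h1 : (∫ u in Set.Ioc 0 x, ∫ v in Set.Ici y, f u v)
        = ∫ u in Set.Ioc 0 x, ftX u * B := by
      refine setIntegral_congr_fun measurableSet_Ioc ?_
      intro u hu
      exact hrow u (le_of_lt hu.1) (le_trans hu.2 hxy)
    rw [h1, integral_mul_const]
  have hcol : (∫ u in Set.Ioc 0 x, f u y) = A * ftY y := by
    have h1 : (∫ u in Set.Ioc 0 x, f u y) = ∫ u in Set.Ioc 0 x, ftX u * ftY y := by
      refine setIntegral_congr_fun measurableSet_Ioc ?_
      intro u hu
      exact hfac u y (le_of_lt hu.1) (le_trans hu.2 hxy)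
    rw [h1, integral_mul_const]
  rw [hπeq, hcol, hrow x hx hxy, hfac x y hx hxy]
  ring
end

section
/- Let f_{XY}(x,y) be a joint density on {0 ≤ x ≤ y} that satisfies, for all observable t < x ≤ y, f_{XY}(x,y) = (f_{XY}(t,y) g(t)/f_X(t)) · (f_X(x)/g(x)) for a positive function g. Let (t_n)_{n≥1} be a strictly decreasing sequence with f_X(t_n) > 0 converging to the infimum of the support of X, and set t_0 = ∞. Then f_{XY} factorizes as f_{XY}(x,y) = f̃_Y(y)·f̃_X(x) with f̃_Y(y) = ∑_{n=1}^∞ (f_{XY}(t_n,y) g(t_n)/f_X(t_n)) · 1{y ∈ (t_n, t_{n−1})} and f̃_X(x) = f_X(x)/g(x); i.e., quasi-independence holds. -/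
open Filter

/-- if the joint density satisfies
`f(x,y) = (f(t,y)·g(t)/f_X(t)) · (f_X(x)/g(x))` for all observable `t < x ≤ y`,
then with a strictly decreasing sequence `t₁ > t₂ > …` (here `t 0 = t₁`,
`t_0 = ∞`) with `f_X(tₙ) > 0` converging to the infimum `l_X` of the support of
`X`, the density factorizes as `f(x,y) = f̃_Y(y)·f̃_X(x)` with
`f̃_Y(y) = ∑ₙ (f(tₙ,y)·g(tₙ)/f_X(tₙ))·1{y ∈ (tₙ, tₙ₋₁)}` and
`f̃_X(x) = f_X(x)/g(x)`: quasi-independence holds. -/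
theorem stmt17 (f : ℝ → ℝ → ℝ) (fX g : ℝ → ℝ)
    (hg : ∀ x, 0 < g x)
    (hrel : ∀ t x y : ℝ, 0 < fX t → 0 < f t y → t < x → x ≤ y →
      f x y = (f t y * g t / fX t) * (fX x / g x))
    (t : ℕ → ℝ) (ht : StrictAnti t)
    (htpos : ∀ n, 0 < fX (t n))
    (hobs : ∀ n y, t n < y → 0 < f (t n) y)
    (lX : ℝ) (hlX : lX = sInf {s : ℝ | 0 < fX s})
    (htlim : Tendsto t atTop (nhds lX))
    (ftY ftX : ℝ → ℝ)
    (hftY : ∀ y, ftY y = ∑' n : ℕ,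
        Set.indicator (if n = 0 then Set.Ioi (t 0) else Set.Ioo (t n) (t (n - 1)))
          (fun _ => f (t n) y * g (t n) / fX (t n)) y)
    (hftX : ∀ x, ftX x = fX x / g x) :
    ∀ x y : ℝ, lX < x → x ≤ y → 0 < fX x → 0 < f x y → y ∉ Set.range t →
      f x y = ftY y * ftX x := by
  classical
  intro x y hlx hxy hfXx hfxy hyr
  have hanti := ht.antitone
  have hly : lX < y := hlx.trans_le hxy
  have hex : ∃ k, t k < y := ((tendsto_order.1 htlim).2 y hly).exists
  set I : ℕ → Set ℝ := fun m =>
    if m = 0 then Set.Ioi (t 0) else Set.Ioo (t m) (t (m - 1)) with hI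
  obtain ⟨n, hyn, hmem⟩ : ∃ n, t n < y ∧ y ∈ I n := by
    by_cases h0 : t 0 < y
    · exact ⟨0, h0, by simp [hI, h0]⟩
    · let n := Nat.find hex
      have hn : t n < y := Nat.find_spec hex
      have hn0 : n ≠ 0 := fun h => h0 (h ▸ hn)
      have hprev : y < t (n - 1) := by
        have h1 : ¬ t (n - 1) < y := Nat.find_min hex (by omega)
        have h2 : y ≠ t (n - 1) := fun h => hyr ⟨n - 1, h.symm⟩
        exact lt_of_le_of_ne (not_lt.1 h1) h2
      exact ⟨n, hn, by simp [hI, hn0, Set.mem_Ioo, hn, hprev]⟩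
  have hnot : ∀ m, m ≠ n → y ∉ I m := by
    intro m hmn
    by_cases hn0 : n = 0
    · subst hn0
      have hy0 : t 0 < y := by simpa [hI] using hmem
      intro hym
      have hm0 : m ≠ 0 := hmn
      simp only [hI, if_neg hm0, Set.mem_Ioo] at hym
      have : t (m - 1) ≤ t 0 := hanti (Nat.zero_le _)
      linarith [hym.2]
    · simp only [hI, if_neg hn0, Set.mem_Ioo] at hmem
      intro hym
      rcases lt_or_gt_of_ne hmn with hlt | hgt
      · by_cases hm0 : m = 0
        · simp only [hI, if_pos hm0, Set.mem_Ioi] at hym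
          have : t (n - 1) ≤ t 0 := hanti (Nat.zero_le _)
          linarith [hmem.2]
        · simp only [hI, if_neg hm0, Set.mem_Ioo] at hym
          have : t (n - 1) ≤ t m := hanti (by omega)
          linarith [hmem.2, hym.1]
      · have hm0 : m ≠ 0 := by omega
        simp only [hI, if_neg hm0, Set.mem_Ioo] at hym
        have : t (m - 1) ≤ t n := hanti (by omega)
        linarith [hmem.1, hym.2]
  have htsum : ftY y = f (t n) y * g (t n) / fX (t n) := by
    rw [hftY y]
    have h := tsum_eq_single (L := SummationFilter.unconditional ℕ) (f := fun m : ℕ =>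
        Set.indicator (if m = 0 then Set.Ioi (t 0) else Set.Ioo (t m) (t (m - 1)))
          (fun _ => f (t m) y * g (t m) / fX (t m)) y) n
      (fun m hm => Set.indicator_of_notMem (hnot m hm) _)
    rw [h]
    exact Set.indicator_of_mem hmem _
  obtain ⟨N, hN⟩ := ((tendsto_order.1 htlim).2 x hlx).exists
  set m := max N (n + 1) with hm
  have htmx : t m < x := lt_of_le_of_lt (hanti (le_max_left _ _)) hN
  have htmn : t m < t n :=
    lt_of_le_of_lt (hanti (le_max_right _ _)) (ht (Nat.lt_succ_self n))
  have htmy : t m < y := htmx.trans_le hxy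
  have h1 := hrel (t m) x y (htpos m) (hobs m y htmy) htmx hxy
  have h2 := hrel (t m) (t n) y (htpos m) (hobs m y htmy) htmn hyn.le
  have hC : f (t n) y * g (t n) / fX (t n) = f (t m) y * g (t m) / fX (t m) := by
    rw [h2]
    field_simp [(htpos n).ne', (htpos m).ne', (hg (t n)).ne']
  rw [htsum, hC, hftX x, h1]
end

section
/- Consider i.i.d. pairs (X_i, Y_i) with P(X_i ≤ Y_i) = 1 and both coordinates having continuous distributions. Define the conditional Kendall's tau estimand τ = E[ 1{max(X_1,X_2) ≤ min(Y_1,Y_2)} · sign((X_1 − X_2)(Y_1 − Y_2)) ]. If X and Y are quasi-independent, i.e., the sub-distribution π(x,y) = P(X ≤ x, Y ≥ y) factorizes as F̃(x)S̃(y) on {x ≤ y} with F̃ nondecreasing and S̃ nonincreasing and the joint density factorizes as f_{XY}(x,y) = f̃_X(x) f̃_Y(y) on {x ≤ y}, then τ = 0. -/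
open MeasureTheory ProbabilityTheory

lemma mpT : MeasurePreserving
    (fun z : (ℝ×ℝ)×(ℝ×ℝ) => ((z.1.1, z.2.2), (z.2.1, z.1.2)))
    ((volume : Measure (ℝ×ℝ)).prod volume) ((volume : Measure (ℝ×ℝ)).prod volume) := by
  have hv : (volume : Measure (ℝ×ℝ)) = (volume : Measure ℝ).prod volume := Measure.volume_eq_prod ℝ ℝ
  rw [hv]
  set vR : Measure ℝ := volume with hvR
  have b1 : MeasurePreserving (Prod.map (id : ℝ → ℝ) (Prod.swap : ℝ×ℝ → ℝ×ℝ))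
      (vR.prod (vR.prod vR)) (vR.prod (vR.prod vR)) :=
    (MeasurePreserving.id vR).prod Measure.measurePreserving_swap
  have b2 : MeasurePreserving (MeasurableEquiv.prodAssoc.symm : ℝ×(ℝ×ℝ) ≃ᵐ (ℝ×ℝ)×ℝ)
      (vR.prod (vR.prod vR)) ((vR.prod vR).prod vR) :=
    (measurePreserving_prodAssoc vR vR vR).symm MeasurableEquiv.prodAssoc
  have b3 : MeasurePreserving (Prod.map (Prod.swap : ℝ×ℝ → ℝ×ℝ) (id : ℝ → ℝ))
      ((vR.prod vR).prod vR) ((vR.prod vR).prod vR) :=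
    Measure.measurePreserving_swap.prod (MeasurePreserving.id vR)
  have b4 : MeasurePreserving (MeasurableEquiv.prodAssoc : (ℝ×ℝ)×ℝ ≃ᵐ ℝ×(ℝ×ℝ))
      ((vR.prod vR).prod vR) (vR.prod (vR.prod vR)) :=
    measurePreserving_prodAssoc vR vR vR
  have B := b1.comp (b4.comp (b3.comp (b2.comp b1)))
  have m1 : MeasurePreserving (MeasurableEquiv.prodAssoc : (ℝ×ℝ)×(ℝ×ℝ) ≃ᵐ ℝ×(ℝ×(ℝ×ℝ)))
      ((vR.prod vR).prod (vR.prod vR)) (vR.prod (vR.prod (vR.prod vR))) :=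
    measurePreserving_prodAssoc vR vR (vR.prod vR)
  have m2 := (MeasurePreserving.id vR).prod B
  have m3 : MeasurePreserving (MeasurableEquiv.prodAssoc.symm : ℝ×(ℝ×(ℝ×ℝ)) ≃ᵐ (ℝ×ℝ)×(ℝ×ℝ))
      (vR.prod (vR.prod (vR.prod vR))) ((vR.prod vR).prod (vR.prod vR)) :=
    (measurePreserving_prodAssoc vR vR (vR.prod vR)).symm MeasurableEquiv.prodAssoc
  have whole := m3.comp (m2.comp m1)
  have hfun : (fun z : (ℝ×ℝ)×(ℝ×ℝ) => ((z.1.1, z.2.2), (z.2.1, z.1.2)))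
      = (MeasurableEquiv.prodAssoc.symm : ℝ×(ℝ×(ℝ×ℝ)) ≃ᵐ (ℝ×ℝ)×(ℝ×ℝ)) ∘
        (Prod.map (id : ℝ → ℝ)
          ((Prod.map (id : ℝ → ℝ) (Prod.swap : ℝ×ℝ → ℝ×ℝ)) ∘
            ((MeasurableEquiv.prodAssoc : (ℝ×ℝ)×ℝ ≃ᵐ ℝ×(ℝ×ℝ)) ∘
              ((Prod.map (Prod.swap : ℝ×ℝ → ℝ×ℝ) (id : ℝ → ℝ)) ∘
                ((MeasurableEquiv.prodAssoc.symm : ℝ×(ℝ×ℝ) ≃ᵐ (ℝ×ℝ)×ℝ) ∘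
                  (Prod.map (id : ℝ → ℝ) (Prod.swap : ℝ×ℝ → ℝ×ℝ))))))) ∘
        (MeasurableEquiv.prodAssoc : (ℝ×ℝ)×(ℝ×ℝ) ≃ᵐ ℝ×(ℝ×(ℝ×ℝ))) := by
    funext z; rfl
  rw [hfun]
  exact whole

lemma sign_sym_zero (Ψ : (ℝ×ℝ)×(ℝ×ℝ) → ℝ)
    (g h : ℝ → ℝ)
    (hΨ : Ψ = fun z => (g z.1.1 * h z.1.2) * (g z.2.1 * h z.2.2) *
      (if max z.1.1 z.2.1 ≤ min z.1.2 z.2.2 then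
          Real.sign ((z.1.1 - z.2.1) * (z.1.2 - z.2.2)) else 0))
    (hmeas : AEStronglyMeasurable Ψ ((volume : Measure (ℝ×ℝ)).prod volume)) :
    ∫ z, Ψ z ∂((volume : Measure (ℝ×ℝ)).prod volume) = 0 := by
  set Q : Measure ((ℝ×ℝ)×(ℝ×ℝ)) := (volume : Measure (ℝ×ℝ)).prod volume with hQ
  have hmp : MeasurePreserving
      (fun z : (ℝ×ℝ)×(ℝ×ℝ) => ((z.1.1, z.2.2), (z.2.1, z.1.2))) Q Q := mpT
  have hneg : ∀ z : (ℝ×ℝ)×(ℝ×ℝ), Ψ ((z.1.1, z.2.2), (z.2.1, z.1.2)) = -Ψ z := by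
    rintro ⟨⟨x1, y1⟩, x2, y2⟩
    simp only [hΨ]
    rw [min_comm y2 y1]
    by_cases hc : max x1 x2 ≤ min y1 y2
    · rw [if_pos hc, if_pos hc,
        show (x1 - x2) * (y2 - y1) = -((x1 - x2) * (y1 - y2)) by ring, Real.sign_neg]
      ring
    · rw [if_neg hc, if_neg hc]; ring
  have h1 : ∫ z, Ψ z ∂Q = ∫ z, Ψ ((z.1.1, z.2.2), (z.2.1, z.1.2)) ∂Q := by
    nth_rewrite 1 [← hmp.map_eq]
    exact integral_map hmp.measurable.aemeasurable (hmp.map_eq.symm ▸ hmeas)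
  have h2 : ∫ z, Ψ ((z.1.1, z.2.2), (z.2.1, z.1.2)) ∂Q = -∫ z, Ψ z ∂Q := by
    simp only [hneg]
    exact integral_neg _
  have := h1.trans h2
  linarith

/-- for i.i.d. pairs `(X₁,Y₁), (X₂,Y₂)` with `P(X ≤ Y) = 1` and
continuous marginals, if `X` and `Y` are quasi-independent — the
sub-distribution `π(x,y) = P(X ≤ x, Y ≥ y)` factorizes as `F̃(x)·S̃(y)` on
`{x ≤ y}` with `F̃` nondecreasing, `S̃` nonincreasing, and the joint law has the
quasi-independent density `f(x,y) = f̃_X(x)·f̃_Y(y)·1{x ≤ y}` — then the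
conditional Kendall's tau
`τ = E[1{max(X₁,X₂) ≤ min(Y₁,Y₂)}·sign((X₁−X₂)(Y₁−Y₂))]` equals `0`. -/
theorem stmt19 {Ω : Type*} [MeasurableSpace Ω] (μ : Measure Ω)
    [IsProbabilityMeasure μ]
    (X₁ Y₁ X₂ Y₂ : Ω → ℝ)
    (hmeas₁ : Measurable (fun ω => (X₁ ω, Y₁ ω)))
    (hmeas₂ : Measurable (fun ω => (X₂ ω, Y₂ ω)))
    (hindep : IndepFun (fun ω => (X₁ ω, Y₁ ω)) (fun ω => (X₂ ω, Y₂ ω)) μ)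
    (hident : IdentDistrib (fun ω => (X₂ ω, Y₂ ω)) (fun ω => (X₁ ω, Y₁ ω)) μ μ)
    (horder : μ {ω | X₁ ω ≤ Y₁ ω} = 1)
    (hcontX : ∀ c : ℝ, μ {ω | X₁ ω = c} = 0)
    (hcontY : ∀ c : ℝ, μ {ω | Y₁ ω = c} = 0)
    (F S : ℝ → ℝ) (hF : Monotone F) (hS : Antitone S)
    (hπ : ∀ x y : ℝ, x ≤ y →
      (μ {ω | X₁ ω ≤ x ∧ y ≤ Y₁ ω}).toReal = F x * S y)
    (ftX ftY : ℝ → ℝ) (hftX : ∀ x, 0 ≤ ftX x) (hftY : ∀ y, 0 ≤ ftY y)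
    (hdens : ∀ s : Set (ℝ × ℝ), MeasurableSet s →
      μ ((fun ω => (X₁ ω, Y₁ ω)) ⁻¹' s)
        = ENNReal.ofReal (∫ p in s,
            (if p.1 ≤ p.2 then ftX p.1 * ftY p.2 else 0))) :
    ∫ ω, (if max (X₁ ω) (X₂ ω) ≤ min (Y₁ ω) (Y₂ ω) then
        Real.sign ((X₁ ω - X₂ ω) * (Y₁ ω - Y₂ ω)) else 0) ∂μ = 0 := by
  classical
  set ν : Measure (ℝ × ℝ) := μ.map (fun ω => (X₁ ω, Y₁ ω)) with hνdef
  have hνprob : IsProbabilityMeasure ν := Measure.isProbabilityMeasure_map hmeas₁.aemeasurable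
  set f : ℝ × ℝ → ℝ := fun p => if p.1 ≤ p.2 then ftX p.1 * ftY p.2 else 0 with hfdef
  have hf0 : ∀ p, 0 ≤ f p := by
    intro p
    by_cases hp : p.1 ≤ p.2 <;>
      simp [hfdef, hp, mul_nonneg (hftX _) (hftY _)]
  set Φ : (ℝ × ℝ) × (ℝ × ℝ) → ℝ := fun z =>
    if max z.1.1 z.2.1 ≤ min z.1.2 z.2.2 then
      Real.sign ((z.1.1 - z.2.1) * (z.1.2 - z.2.2)) else 0 with hΦdef
  have hsign : Measurable Real.sign := by
    have : Real.sign = fun r : ℝ => if r < 0 then (-1 : ℝ) else if 0 < r then 1 else 0 := by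
      funext r; rfl
    rw [this]
    exact Measurable.ite (measurableSet_lt measurable_id measurable_const) measurable_const
      (Measurable.ite (measurableSet_lt measurable_const measurable_id) measurable_const
        measurable_const)
  have hΦmeas : Measurable Φ := by
    refine Measurable.ite (measurableSet_le (measurable_fst.fst.max measurable_snd.fst)
      (measurable_fst.snd.min measurable_snd.snd)) ?_ measurable_const
    exact hsign.comp ((measurable_fst.fst.sub measurable_snd.fst).mul
      (measurable_fst.snd.sub measurable_snd.snd))
  -- Step 1: rewrite as an integral over ν.prod ν
  have hjoint : μ.map (fun ω => ((X₁ ω, Y₁ ω), (X₂ ω, Y₂ ω))) = ν.prod ν := by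
    rw [(indepFun_iff_map_prod_eq_prod_map_map hmeas₁.aemeasurable
      hmeas₂.aemeasurable).mp hindep, hident.map_eq]
  have step1 : (∫ ω, (if max (X₁ ω) (X₂ ω) ≤ min (Y₁ ω) (Y₂ ω) then
        Real.sign ((X₁ ω - X₂ ω) * (Y₁ ω - Y₂ ω)) else 0) ∂μ)
      = ∫ z, Φ z ∂(ν.prod ν) := by
    rw [← hjoint, integral_map (hmeas₁.prodMk hmeas₂).aemeasurable
      hΦmeas.aestronglyMeasurable]
  -- the density representation of ν
  have hνs : ∀ s : Set (ℝ × ℝ), MeasurableSet s →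
      ν s = ENNReal.ofReal (∫ p in s, f p) := by
    intro s hs
    rw [hνdef, Measure.map_apply hmeas₁ hs]
    exact hdens s hs
  have hint : Integrable f (volume : Measure (ℝ × ℝ)) := by
    by_contra hcon
    have h1 := hνs Set.univ MeasurableSet.univ
    rw [Measure.restrict_univ, integral_undef hcon] at h1
    simp [measure_univ] at h1
  have hνl : ∀ s : Set (ℝ × ℝ), MeasurableSet s →
      ν s = ∫⁻ p in s, ENNReal.ofReal (f p) := by
    intro s hs
    rw [hνs s hs]
    exact ofReal_integral_eq_lintegral_ofReal (hint.restrict) (ae_of_all _ hf0)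
  have haem : AEMeasurable (fun p : ℝ × ℝ => ENNReal.ofReal (f p))
      (volume : Measure (ℝ × ℝ)) :=
    ENNReal.measurable_ofReal.comp_aemeasurable hint.aemeasurable
  -- product density representation
  have hprod : ν.prod ν = ((volume : Measure (ℝ × ℝ)).prod volume).withDensity
      (fun z => ENNReal.ofReal (f z.1) * ENNReal.ofReal (f z.2)) := by
    refine Measure.prod_eq fun s t hs ht => ?_
    rw [withDensity_apply _ (hs.prod ht), ← Measure.prod_restrict,
      lintegral_prod_mul haem.restrict haem.restrict, ← hνl s hs, ← hνl t ht]
  -- transfer the integral to Lebesgue measure with density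
  set w : ℝ × ℝ → NNReal := fun p => (f p).toNNReal with hwdef
  have hwaem : AEMeasurable (fun z : (ℝ × ℝ) × (ℝ × ℝ) => w z.1 * w z.2)
      ((volume : Measure (ℝ × ℝ)).prod volume) := by
    have hw : AEMeasurable w (volume : Measure (ℝ × ℝ)) :=
      measurable_real_toNNReal.comp_aemeasurable hint.aemeasurable
    exact (hw.comp_quasiMeasurePreserving Measure.quasiMeasurePreserving_fst).mul
      (hw.comp_quasiMeasurePreserving Measure.quasiMeasurePreserving_snd)
  have hdcoe : (fun z : (ℝ × ℝ) × (ℝ × ℝ) => ENNReal.ofReal (f z.1) * ENNReal.ofReal (f z.2))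
      = fun z => ((w z.1 * w z.2 : NNReal) : ENNReal) := by
    funext z
    simp [hwdef, ENNReal.coe_mul, ENNReal.ofReal]
  have step2 : ∫ z, Φ z ∂(ν.prod ν)
      = ∫ z, (w z.1 * w z.2 : NNReal) • Φ z ∂((volume : Measure (ℝ × ℝ)).prod volume) := by
    rw [hprod, hdcoe]
    exact integral_withDensity_eq_integral_smul₀ hwaem Φ
  -- identify the integrand with the symmetric-zero integrand
  set Ψ : (ℝ × ℝ) × (ℝ × ℝ) → ℝ := fun z =>
    (ftX z.1.1 * ftY z.1.2) * (ftX z.2.1 * ftY z.2.2) *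
      (if max z.1.1 z.2.1 ≤ min z.1.2 z.2.2 then
          Real.sign ((z.1.1 - z.2.1) * (z.1.2 - z.2.2)) else 0) with hΨdef
  have hptwise : ∀ z : (ℝ × ℝ) × (ℝ × ℝ), (w z.1 * w z.2 : NNReal) • Φ z = Ψ z := by
    intro z
    have hcoe : ((w z.1 * w z.2 : NNReal) : ℝ) = f z.1 * f z.2 := by
      simp [hwdef, Real.coe_toNNReal _ (hf0 _)]
    rw [NNReal.smul_def, hcoe]
    by_cases hc : max z.1.1 z.2.1 ≤ min z.1.2 z.2.2
    · have h11 : z.1.1 ≤ z.1.2 :=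
        le_trans (le_max_left _ _) (hc.trans (min_le_left _ _))
      have h22 : z.2.1 ≤ z.2.2 :=
        le_trans (le_max_right _ _) (hc.trans (min_le_right _ _))
      simp only [hΨdef, hΦdef, hfdef, if_pos h11, if_pos h22, if_pos hc, smul_eq_mul]
    · simp only [hΨdef, hΦdef, if_neg hc, mul_zero, smul_zero]
  have hΨfun : Ψ = fun z => f z.1 * f z.2 * Φ z := by
    funext z
    rw [← hptwise z, NNReal.smul_def]
    congr 1
    simp [hwdef, Real.coe_toNNReal _ (hf0 _)]
  have hΨmeas : AEStronglyMeasurable Ψ ((volume : Measure (ℝ × ℝ)).prod volume) := by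
    rw [hΨfun]
    exact ((hint.aestronglyMeasurable.comp_quasiMeasurePreserving
        Measure.quasiMeasurePreserving_fst).mul
      (hint.aestronglyMeasurable.comp_quasiMeasurePreserving
        Measure.quasiMeasurePreserving_snd)).mul hΦmeas.aestronglyMeasurable
  have key : ∫ z, Ψ z ∂((volume : Measure (ℝ × ℝ)).prod volume) = 0 :=
    sign_sym_zero Ψ ftX ftY hΨdef hΨmeas
  rw [step1, step2]
  calc ∫ z, (w z.1 * w z.2 : NNReal) • Φ z ∂((volume : Measure (ℝ × ℝ)).prod volume)
      = ∫ z, Ψ z ∂((volume : Measure (ℝ × ℝ)).prod volume) := by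
        exact integral_congr_ae (ae_of_all _ hptwise)
    _ = 0 := key
end
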